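/- Let D be a tight multipartite tournament of order n having a maximum anti-{1,2}-competing set S of size three. Then one of the following holds: (a) C_{1,2}(D) is isomorphic to K_n − E(K₃), the complete graph on n vertices with the three edges among the vertices of S removed; (b) n ≥ 4 and C_{1,2}(D) is isomorphic to K_n − (E(K₃) ∪ E(K_{1,l})) for some positive integer l ≤ n − 3, where K₃ is on the vertex set S and the star K_{1,l} has its center at a vertex v with V(K₃) ∩ V(K_{1,l}) = {v} and its l leaves outside S. -/

import Mathlib

/-- Adjacency in the (1,2)-step competition graph `C_{1,2}(D)` of the (simple) digraph `D`
with arc relation `A`: there is a vertex `w` distinct from `u` and `v` such that either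
(`d_{D-v}(u,w) ≤ 1` and `d_{D-u}(v,w) ≤ 2`) or (`d_{D-u}(v,w) ≤ 1` and `d_{D-v}(u,w) ≤ 2`). -/
def CompAdj {V : Type*} (A : V → V → Prop) (u v : V) : Prop :=
  u ≠ v ∧ ∃ w, w ≠ u ∧ w ≠ v ∧
    ((A u w ∧ (A v w ∨ ∃ z, z ≠ u ∧ A v z ∧ A z w)) ∨
     (A v w ∧ (A u w ∨ ∃ z, z ≠ v ∧ A u z ∧ A z w)))

/-- The (1,2)-step competition graph `C_{1,2}(D)` of the digraph with arc relation `A`. -/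
def compGraph {V : Type*} (A : V → V → Prop) : SimpleGraph V where
  Adj := CompAdj A
  symm := by
    constructor
    rintro u v ⟨hne, w, h1, h2, h3⟩
    exact ⟨hne.symm, w, h2, h1, h3.symm⟩
  loopless := by constructor; rintro u ⟨hne, -⟩; exact hne rfl

/-- Vertices `u` and `v` `(1,2)`-compete in the digraph with arc relation `A`: there is a
vertex `w` distinct from `u` and `v` such that either (`u → w` and there is a directed path
of length 2 from `v` to `w` not traversing `u`) or vice versa. -/
def OneTwoCompete {V : Type*} (A : V → V → Prop) (u v : V) : Prop :=
  ∃ w, w ≠ u ∧ w ≠ v ∧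
    ((A u w ∧ ∃ z, z ≠ u ∧ A v z ∧ A z w) ∨
     (A v w ∧ ∃ z, z ≠ v ∧ A u z ∧ A z w))

/-- `A` is an orientation of the complete multipartite graph whose parts are the fibres of
`p : V → ι`: no arcs within a part, and exactly one arc between any two vertices in
different parts. -/
def IsCompleteMultipartiteOrientation {V ι : Type*} (A : V → V → Prop) (p : V → ι) : Prop :=
  (∀ u v : V, p u = p v → ¬ A u v) ∧
  ∀ u v : V, p u ≠ p v → (A u v ∨ A v u) ∧ ¬ (A u v ∧ A v u)

/-- A multipartite tournament: an orientation of a complete `k`-partite graph with `k ≥ 3`,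
whose partite sets are the (nonempty) fibres of `p : V → ι`. -/
def IsMultipartiteTournament {V ι : Type*} [Fintype ι] (A : V → V → Prop) (p : V → ι) : Prop :=
  Function.Surjective p ∧ 3 ≤ Fintype.card ι ∧ IsCompleteMultipartiteOrientation A p

/-- A multipartite tournament is tight if every partite set is a clique in `C_{1,2}(D)`. -/
def IsTight {V ι : Type*} (A : V → V → Prop) (p : V → ι) : Prop :=
  ∀ u v : V, u ≠ v → p u = p v → CompAdj A u v

/-- A tournament: an orientation of a complete graph. -/
def IsTournament {V : Type*} (A : V → V → Prop) : Prop :=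
  (∀ u, ¬ A u u) ∧ ∀ u v : V, u ≠ v → (A u v ∨ A v u) ∧ ¬ (A u v ∧ A v u)

/-!
The three vertices of `S` lie in distinct partite sets (by tightness), so they span a
tournament; it cannot be transitive, since the two arcs into its sink would make their tails
compete. Hence `S` is a directed triangle `a → b → c → a`. Every vertex has an out-neighbour
on the triangle, and any two vertices outside `S` then compete through the triangle. A vertex
`x ∉ S` that does not compete with `a` is forced into the partite set of `b` with
`c → x → a`. A vertex missing `a` and one missing `b` thus lie in the parts of `b` and `c`,
so they are joined by an arc, and either direction of it makes one of them compete with the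
vertex it misses. So all non-adjacencies between `S` and its complement share one end `v ∈ S`.
-/

section

variable {V ι : Type*} {A : V → V → Prop} {p : V → ι} {a b c u v w x y z : V}

namespace CompAdj

theorem symm (h : CompAdj A u v) : CompAdj A v u := (compGraph A).adj_symm h

theorem of_common_out (hirr : ∀ x, ¬ A x x) (huv : u ≠ v) (hu : A u w) (hv : A v w) :
    CompAdj A u v :=
  ⟨huv, w, fun h => hirr u (h ▸ hu), fun h => hirr v (h ▸ hv), Or.inl ⟨hu, Or.inl hv⟩⟩

theorem of_out_path (hirr : ∀ x, ¬ A x x) (huv : u ≠ v) (hzu : z ≠ u) (hwv : w ≠ v)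
    (hu : A u w) (hv : A v z) (hz : A z w) : CompAdj A u v :=
  ⟨huv, w, fun h => hirr u (h ▸ hu), hwv, Or.inl ⟨hu, Or.inr ⟨z, hzu, hv, hz⟩⟩⟩

theorem of_out_arcs (hirr : ∀ x, ¬ A x x) (hxy : x ≠ y) (hu : A x u) (hv : A y v)
    (huy : u ≠ y) (hvx : v ≠ x) (huv : u = v ∨ A u v ∨ A v u) : CompAdj A x y := by
  rcases huv with rfl | huv | hvu
  · exact of_common_out hirr hxy hu hv
  · exact (of_out_path hirr hxy.symm huy hvx hv hu huv).symm
  · exact of_out_path hirr hxy hvx huy hu hv hvu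

end CompAdj

namespace IsCompleteMultipartiteOrientation

theorem irrefl (hD : IsCompleteMultipartiteOrientation A p) (u : V) : ¬ A u u :=
  hD.1 u u rfl

theorem part_ne_of_arc (hD : IsCompleteMultipartiteOrientation A p) (h : A u v) :
    p u ≠ p v :=
  fun hp => hD.1 u v hp h

theorem ne_of_arc (hD : IsCompleteMultipartiteOrientation A p) (h : A u v) : u ≠ v :=
  ne_of_apply_ne p (hD.part_ne_of_arc h)

theorem arc_of_not_arc (hD : IsCompleteMultipartiteOrientation A p) (hp : p u ≠ p v)
    (h : ¬ A u v) : A v u :=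
  (hD.2 u v hp).1.resolve_left h

end IsCompleteMultipartiteOrientation

structure IsNoncompetingCycle (A : V → V → Prop) (a b c : V) : Prop where
  arc_ab : A a b
  arc_bc : A b c
  arc_ca : A c a
  not_ab : ¬ CompAdj A a b
  not_bc : ¬ CompAdj A b c
  not_ca : ¬ CompAdj A c a

theorem IsCompleteMultipartiteOrientation.isNoncompetingCycle_or
    (hD : IsCompleteMultipartiteOrientation A p) (pab : p a ≠ p b) (pbc : p b ≠ p c)
    (pca : p c ≠ p a) (nab : ¬ CompAdj A a b) (nbc : ¬ CompAdj A b c) (nca : ¬ CompAdj A c a) :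
    IsNoncompetingCycle A a b c ∨ IsNoncompetingCycle A a c b := by
  have hab : a ≠ b := ne_of_apply_ne p pab
  have hbc : b ≠ c := ne_of_apply_ne p pbc
  have hca : c ≠ a := ne_of_apply_ne p pca
  rcases (hD.2 a b pab).1 with h1 | h1 <;> rcases (hD.2 b c pbc).1 with h2 | h2 <;>
    rcases (hD.2 c a pca).1 with h3 | h3 <;> first
    | exact Or.inl ⟨h1, h2, h3, nab, nbc, nca⟩
    | exact Or.inr ⟨h3, h2, h1, fun h => nca h.symm, fun h => nbc h.symm, fun h => nab h.symm⟩
    | exact absurd (CompAdj.of_common_out hD.irrefl hab ‹A a c› ‹A b c›) nab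
    | exact absurd (CompAdj.of_common_out hD.irrefl hbc ‹A b a› ‹A c a›) nbc
    | exact absurd (CompAdj.of_common_out hD.irrefl hca ‹A c b› ‹A a b›) nca

theorem exists_isNoncompetingCycle [DecidableEq V] (hD : IsCompleteMultipartiteOrientation A p)
    (htight : IsTight A p) {S : Finset V} (hS3 : S.card = 3)
    (hstable : ∀ x ∈ S, ∀ y ∈ S, x ≠ y → ¬ CompAdj A x y) :
    ∃ a b c, S = {a, b, c} ∧ IsNoncompetingCycle A a b c := by
  obtain ⟨a, b, c, hab, hac, hbc, rfl⟩ := Finset.card_eq_three.mp hS3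
  have ha : a ∈ ({a, b, c} : Finset V) := by simp
  have hb : b ∈ ({a, b, c} : Finset V) := by simp
  have hc : c ∈ ({a, b, c} : Finset V) := by simp
  have hpart : ∀ {x y}, x ∈ ({a, b, c} : Finset V) → y ∈ ({a, b, c} : Finset V) → x ≠ y →
      p x ≠ p y :=
    fun hx hy hxy hp => hstable _ hx _ hy hxy (htight _ _ hxy hp)
  rcases hD.isNoncompetingCycle_or (hpart ha hb hab) (hpart hb hc hbc) (hpart hc ha hac.symm)
    (hstable a ha b hb hab) (hstable b hb c hc hbc) (hstable c hc a ha hac.symm) with h | h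
  · exact ⟨a, b, c, rfl, h⟩
  · exact ⟨a, c, b, by rw [Finset.pair_comm], h⟩

namespace IsNoncompetingCycle

theorem rotate (h : IsNoncompetingCycle A a b c) : IsNoncompetingCycle A b c a :=
  ⟨h.arc_bc, h.arc_ca, h.arc_ab, h.not_bc, h.not_ca, h.not_ab⟩

theorem out_arc (h : IsNoncompetingCycle A a b c) (hD : IsCompleteMultipartiteOrientation A p)
    (x : V) : A x a ∨ A x b ∨ A x c := by
  by_contra! hx
  obtain ⟨hxa, hxb, hxc⟩ := hx
  have same_part : ∀ {s t}, ¬ CompAdj A s t → s ≠ t → ¬ A x s → ¬ A x t →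
      p x = p s ∨ p x = p t := by
    intro s t hst hne hs ht
    by_contra! hp
    exact hst (.of_common_out hD.irrefl hne (hD.arc_of_not_arc hp.1 hs)
      (hD.arc_of_not_arc hp.2 ht))
  -- each pair puts `x` into the part of one of its members, so `x` would lie in two of three parts
  have := same_part h.not_ab (hD.ne_of_arc h.arc_ab) hxa hxb
  have := same_part h.not_bc (hD.ne_of_arc h.arc_bc) hxb hxc
  have := same_part h.not_ca (hD.ne_of_arc h.arc_ca) hxc hxa
  have := hD.part_ne_of_arc h.arc_ab
  have := hD.part_ne_of_arc h.arc_bc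
  have := hD.part_ne_of_arc h.arc_ca
  grind

theorem compAdj_of_not_mem [DecidableEq V] (h : IsNoncompetingCycle A a b c)
    (hD : IsCompleteMultipartiteOrientation A p) (hx : x ∉ ({a, b, c} : Finset V))
    (hy : y ∉ ({a, b, c} : Finset V)) (hxy : x ≠ y) : CompAdj A x y := by
  rcases h.out_arc hD x with hs | hs | hs <;> rcases h.out_arc hD y with ht | ht | ht <;>
    exact .of_out_arcs hD.irrefl hxy hs ht (by rintro rfl; simp at hy)
      (by rintro rfl; simp at hx) (by simp [h.arc_ab, h.arc_bc, h.arc_ca])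

theorem arcs_of_not_compAdj (h : IsNoncompetingCycle A a b c)
    (hD : IsCompleteMultipartiteOrientation A p) (hxa : x ≠ a) (hxb : x ≠ b) (hxc : x ≠ c)
    (hn : ¬ CompAdj A x a) : A x a ∧ A c x ∧ p x = p b := by
  have nxb : ¬ A x b := fun hxb' => hn (.of_common_out hD.irrefl hxa hxb' h.arc_ab)
  have nxc : ¬ A x c := fun hxc' =>
    hn (.of_out_path hD.irrefl hxa hxb.symm (hD.ne_of_arc h.arc_ca) hxc' h.arc_ab h.arc_bc)
  have hxa' : A x a := (h.out_arc hD x).resolve_right (by tauto)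
  have nbx : ¬ A b x := fun hbx => h.not_bc (CompAdj.of_out_path hD.irrefl
    (hD.ne_of_arc h.arc_bc).symm hxc (hD.ne_of_arc h.arc_ab) h.arc_ca hbx hxa').symm
  have hpxb : p x = p b := by
    by_contra hp
    exact nbx (hD.arc_of_not_arc hp nxb)
  have hpxc : p x ≠ p c := by
    rw [hpxb]
    exact hD.part_ne_of_arc h.arc_bc
  exact ⟨hxa', hD.arc_of_not_arc hpxc nxc, hpxb⟩

theorem false_of_not_compAdj (h : IsNoncompetingCycle A a b c)
    (hD : IsCompleteMultipartiteOrientation A p) (hxa : x ≠ a) (hxb : x ≠ b) (hxc : x ≠ c)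
    (hya : y ≠ a) (hyb : y ≠ b) (hyc : y ≠ c) (hnx : ¬ CompAdj A x a)
    (hny : ¬ CompAdj A y b) : False := by
  obtain ⟨hxa', hcx, hpx⟩ := h.arcs_of_not_compAdj hD hxa hxb hxc hnx
  obtain ⟨hyb', hay, hpy⟩ := h.rotate.arcs_of_not_compAdj hD hyb hyc hya hny
  have hp : p x ≠ p y := by
    rw [hpx, hpy]
    exact hD.part_ne_of_arc h.arc_bc
  rcases (hD.2 x y hp).1 with hxy | hyx
  · exact hnx (CompAdj.of_out_path hD.irrefl hxa.symm hya hxb.symm h.arc_ab hxy hyb').symm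
  · exact hny (.of_out_path hD.irrefl hyb hyc.symm hxb hyx h.arc_bc hcx)

theorem eq_of_not_compAdj [DecidableEq V] (h : IsNoncompetingCycle A a b c)
    (hD : IsCompleteMultipartiteOrientation A p) (hx : x ∉ ({a, b, c} : Finset V))
    (hy : y ∉ ({a, b, c} : Finset V)) (hu : u ∈ ({a, b, c} : Finset V))
    (hw : w ∈ ({a, b, c} : Finset V)) (hxu : ¬ CompAdj A x u) (hyw : ¬ CompAdj A y w) :
    u = w := by
  simp only [Finset.mem_insert, Finset.mem_singleton, not_or] at hx hy hu hw
  obtain ⟨hxa, hxb, hxc⟩ := hx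
  obtain ⟨hya, hyb, hyc⟩ := hy
  rcases hu with rfl | rfl | rfl <;> rcases hw with rfl | rfl | rfl
  · rfl
  · exact (h.false_of_not_compAdj hD hxa hxb hxc hya hyb hyc hxu hyw).elim
  · exact (h.rotate.rotate.false_of_not_compAdj hD hyc hya hyb hxc hxa hxb hyw hxu).elim
  · exact (h.false_of_not_compAdj hD hya hyb hyc hxa hxb hxc hyw hxu).elim
  · rfl
  · exact (h.rotate.false_of_not_compAdj hD hxb hxc hxa hyb hyc hya hxu hyw).elim
  · exact (h.rotate.rotate.false_of_not_compAdj hD hxc hxa hxb hyc hya hyb hxu hyw).elim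
  · exact (h.rotate.false_of_not_compAdj hD hyb hyc hya hxb hxc hxa hyw hxu).elim
  · rfl

end IsNoncompetingCycle

end

namespace SimpleGraph

variable {V : Type*} [Fintype V] (G : SimpleGraph V)

theorem adj_iff_of_isIndep_of_isClique_compl_of_unique_center (S : Finset V)
    (hS : ∀ x ∈ S, ∀ y ∈ S, x ≠ y → ¬ G.Adj x y)
    (hSc : ∀ x ∉ S, ∀ y ∉ S, x ≠ y → G.Adj x y)
    (hcenter : ∀ x ∉ S, ∀ y ∉ S, ∀ u ∈ S, ∀ w ∈ S, ¬ G.Adj x u → ¬ G.Adj y w → u = w) :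
    (∀ x y : V, x ≠ y → (G.Adj x y ↔ ¬ (x ∈ S ∧ y ∈ S))) ∨
    (S.card < Fintype.card V ∧ ∃ v ∈ S, ∃ L : Finset V, 1 ≤ L.card ∧
      L.card ≤ Fintype.card V - S.card ∧ (∀ x ∈ L, x ∉ S) ∧
      ∀ x y : V, x ≠ y →
        (G.Adj x y ↔ ¬ ((x ∈ S ∧ y ∈ S) ∨ (x = v ∧ y ∈ L) ∨ (y = v ∧ x ∈ L)))) := by
  classical
  by_cases hstar : ∃ x₀ ∉ S, ∃ v ∈ S, ¬ G.Adj x₀ v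
  · obtain ⟨x₀, hx₀, v, hv, hx₀v⟩ := hstar
    set L := Finset.univ.filter fun y => y ∉ S ∧ ¬ G.Adj y v
    have hL : ∀ y, y ∈ L ↔ y ∉ S ∧ ¬ G.Adj y v := by simp [L]
    have hmixed : ∀ u ∈ S, ∀ y ∉ S, G.Adj u y ↔ ¬ (u = v ∧ y ∈ L) := by
      intro u hu y hy
      by_cases huv : u = v
      · subst huv
        simp [hL, hy, G.adj_comm]
      · simp only [huv, false_and, not_false_eq_true, iff_true]
        by_contra hn
        exact huv (hcenter y hy x₀ hx₀ u hu v hv (fun h => hn h.symm) hx₀v)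
    refine Or.inr ⟨?_, v, hv, L, ?_, ?_, fun x hx => ((hL x).1 hx).1, ?_⟩
    · calc S.card < (insert x₀ S).card := by rw [Finset.card_insert_of_notMem hx₀]; omega
        _ ≤ Fintype.card V := Finset.card_le_univ _
    · exact Finset.card_pos.mpr ⟨x₀, (hL x₀).2 ⟨hx₀, hx₀v⟩⟩
    · rw [← Finset.card_compl]
      exact Finset.card_le_card fun y hy => Finset.mem_compl.mpr ((hL y).1 hy).1
    · intro x y hxy
      by_cases hx : x ∈ S <;> by_cases hy : y ∈ S
      · simp [hx, hy, hS x hx y hy hxy]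
      · have hyv : y ≠ v := (ne_of_mem_of_not_mem hv hy).symm
        simp [hx, hy, hyv, hmixed x hx y hy]
      · have hxv : x ≠ v := (ne_of_mem_of_not_mem hv hx).symm
        simp [hx, hy, hxv, G.adj_comm x y, hmixed y hy x hx]
      · have hxv : x ≠ v := (ne_of_mem_of_not_mem hv hx).symm
        have hyv : y ≠ v := (ne_of_mem_of_not_mem hv hy).symm
        simp [hx, hy, hxv, hyv, hSc x hx y hy hxy]
  · push Not at hstar
    refine Or.inl fun x y hxy => ?_
    by_cases hx : x ∈ S <;> by_cases hy : y ∈ S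
    · simp [hx, hy, hS x hx y hy hxy]
    · simp [hx, hy, G.adj_comm x y, hstar y hy x hx]
    · simp [hx, hy, hstar x hx y hy]
    · simp [hx, hy, hSc x hx y hy hxy]

end SimpleGraph

theorem stmt17_general {V ι : Type*} [Fintype V] [Fintype ι]
    (A : V → V → Prop) (p : V → ι) (hD : IsMultipartiteTournament A p)
    (htight : IsTight A p) (n : ℕ) (hn : Fintype.card V = n)
    (S : Finset V) (hS3 : S.card = 3)
    (hstable : ∀ x ∈ S, ∀ y ∈ S, x ≠ y → ¬ (compGraph A).Adj x y) :
    (∀ x y : V, x ≠ y → ((compGraph A).Adj x y ↔ ¬ (x ∈ S ∧ y ∈ S))) ∨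
    (4 ≤ n ∧ ∃ v ∈ S, ∃ L : Finset V, 1 ≤ L.card ∧ L.card ≤ n - 3 ∧
      (∀ x ∈ L, x ∉ S) ∧
      ∀ x y : V, x ≠ y →
        ((compGraph A).Adj x y ↔
          ¬ ((x ∈ S ∧ y ∈ S) ∨ (x = v ∧ y ∈ L) ∨ (y = v ∧ x ∈ L)))) := by
  classical
  obtain ⟨a, b, c, rfl, hcycle⟩ := exists_isNoncompetingCycle hD.2.2 htight hS3 hstable
  have h := (compGraph A).adj_iff_of_isIndep_of_isClique_compl_of_unique_center _ hstable
    (fun x hx y hy => hcycle.compAdj_of_not_mem hD.2.2 hx hy)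
    (fun x hx y hy u hu w hw => hcycle.eq_of_not_compAdj hD.2.2 hx hy hu hw)
  rwa [hS3, hn] at h

/-- Let `D` be a tight multipartite tournament of order `n` having a maximum
anti-`{1,2}`-competing set `S` of size three. Then either (a) `C_{1,2}(D) ≅ K_n − E(K₃)`
where `K₃` is on `S`, or (b) `n ≥ 4` and `C_{1,2}(D) ≅ K_n − (E(K₃) ∪ E(K_{1,l}))` for
some `1 ≤ l ≤ n − 3`, where `K₃` is on `S` and the star `K_{1,l}` has its center at a
vertex `v ∈ S` and its `l` leaves outside `S`. -/
theorem stmt17 {V ι : Type*} [Fintype V] [Fintype ι]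
    (A : V → V → Prop) (p : V → ι) (hD : IsMultipartiteTournament A p)
    (htight : IsTight A p) (n : ℕ) (hn : Fintype.card V = n)
    (S : Finset V) (hS3 : S.card = 3)
    (hstable : ∀ x ∈ S, ∀ y ∈ S, x ≠ y → ¬ (compGraph A).Adj x y)
    (hmax : ∀ T : Finset V, (∀ x ∈ T, ∀ y ∈ T, x ≠ y → ¬ (compGraph A).Adj x y) →
      T.card ≤ 3) :
    (∀ x y : V, x ≠ y → ((compGraph A).Adj x y ↔ ¬ (x ∈ S ∧ y ∈ S))) ∨
    (4 ≤ n ∧ ∃ v ∈ S, ∃ L : Finset V, 1 ≤ L.card ∧ L.card ≤ n - 3 ∧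
      (∀ x ∈ L, x ∉ S) ∧
      ∀ x y : V, x ≠ y →
        ((compGraph A).Adj x y ↔
          ¬ ((x ∈ S ∧ y ∈ S) ∨ (x = v ∧ y ∈ L) ∨ (y = v ∧ x ∈ L)))) :=
  stmt17_general A p hD htight n hn S hS3 hstable
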